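/- arXiv:2601.10442 — 2 statements merged into one kernel-verified Lean document; each statement's English description precedes it below -/
import Mathlib

section
/- For every real β ≠ 0, the SoftplusSquared function x ↦ (1/(2·β⁴))·(log(1 + exp(β²·x)))² is convex on ℝ and monotone nondecreasing on ℝ. -/
/-!
The softplus `log (1 + exp t)` is positive, increasing, and convex, its derivative being the
logistic sigmoid. Precomposing with `t = β² x` (a nonnegative scaling) keeps all three
properties, and squaring a nonnegative monotone convex function and multiplying by the
nonnegative constant `1 / (2 β⁴)` keeps convexity and monotonicity.
-/

open Real Set

lemma log_one_add_exp_pos (x : ℝ) : 0 < log (1 + exp x) :=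
  log_pos (lt_add_of_pos_right 1 (exp_pos x))

lemma monotone_log_one_add_exp : Monotone fun x : ℝ => log (1 + exp x) := fun _ _ hxy =>
  log_le_log (by positivity) (add_le_add_right (exp_le_exp.mpr hxy) 1)

lemma hasDerivAt_log_one_add_exp (x : ℝ) :
    HasDerivAt (fun x : ℝ => log (1 + exp x)) (sigmoid x) x := by
  have h := ((hasDerivAt_exp x).const_add 1).log (by positivity)
  convert h using 1
  rw [sigmoid_def, exp_neg]
  field_simp
  ring

lemma convexOn_log_one_add_exp : ConvexOn ℝ univ fun x : ℝ => log (1 + exp x) := by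
  have hderiv : deriv (fun x : ℝ => log (1 + exp x)) = sigmoid :=
    funext fun x => (hasDerivAt_log_one_add_exp x).deriv
  exact Monotone.convexOn_univ_of_deriv
    (fun x => (hasDerivAt_log_one_add_exp x).differentiableAt) (hderiv ▸ sigmoid_monotone)

theorem softplusSquared_convex_mono_general (β : ℝ) :
    ConvexOn ℝ Set.univ
      (fun x : ℝ => (1 / (2 * β ^ 4)) * (Real.log (1 + Real.exp (β ^ 2 * x))) ^ 2) ∧
    Monotone
      (fun x : ℝ => (1 / (2 * β ^ 4)) * (Real.log (1 + Real.exp (β ^ 2 * x))) ^ 2) := by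
  set g := fun x : ℝ => log (1 + exp (β ^ 2 * x))
  have hc : 0 ≤ 1 / (2 * β ^ 4) := by positivity
  have hg₀ : ∀ x, 0 ≤ g x := fun x => (log_one_add_exp_pos _).le
  have hg_convex : ConvexOn ℝ univ g :=
    convexOn_log_one_add_exp.comp_linearMap (LinearMap.mul ℝ ℝ (β ^ 2))
  have hg_mono : Monotone g :=
    monotone_log_one_add_exp.comp (monotone_mul_left_of_nonneg (sq_nonneg β))
  exact ⟨(hg_convex.pow (fun x _ => hg₀ x) 2).smul hc, fun a b hab =>
    mul_le_mul_of_nonneg_left (pow_le_pow_left₀ (hg₀ a) (hg_mono hab) 2) hc⟩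

/-- For every β ≠ 0, the SoftplusSquared function
x ↦ (1/(2β⁴))·(log(1 + exp(β²·x)))² is convex and monotone nondecreasing on ℝ. -/
theorem softplusSquared_convex_mono (β : ℝ) (hβ : β ≠ 0) :
    ConvexOn ℝ Set.univ
      (fun x : ℝ => (1 / (2 * β ^ 4)) * (Real.log (1 + Real.exp (β ^ 2 * x))) ^ 2) ∧
    Monotone
      (fun x : ℝ => (1 / (2 * β ^ 4)) * (Real.log (1 + Real.exp (β ^ 2 * x))) ^ 2) :=
  softplusSquared_convex_mono_general β
end

section
/- For every real β ≠ 0, the SoftplusSquared function x ↦ (1/(2·β⁴))·(log(1 + exp(β²·x)))² is twice differentiable on ℝ with strictly positive second derivative at every point; in particular it is strictly convex on ℝ. -/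
/-!
With `s = log (1 + exp)` the softplus function and `σ = s'` the sigmoid, the substitution
`t = β² x` turns `S_β` into `s(t)² / (2 β⁴)`, and the two factors `β²` produced by the chain rule
cancel the prefactor: `S_β''(x) = σ(t)² + s(t) σ(t) (1 - σ(t))`. Both summands are positive because
`s > 0` and `0 < σ < 1`.
-/

namespace Real

noncomputable def softplus (x : ℝ) : ℝ := log (1 + exp x)

lemma softplus_pos (x : ℝ) : 0 < softplus x :=
  log_pos (lt_add_of_pos_right 1 (exp_pos x))

lemma hasDerivAt_softplus (x : ℝ) : HasDerivAt softplus (sigmoid x) x := by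
  refine (((hasDerivAt_exp x).const_add 1).log (by positivity)).congr_deriv ?_
  rw [sigmoid_def, exp_neg]
  field

lemma hasDerivAt_softplus_mul_sigmoid (x : ℝ) :
    HasDerivAt (fun t ↦ softplus t * sigmoid t)
      (sigmoid x ^ 2 + softplus x * (sigmoid x * (1 - sigmoid x))) x := by
  refine ((hasDerivAt_softplus x).mul (hasDerivAt_sigmoid x)).congr_deriv ?_
  ring

lemma sigmoid_sq_add_softplus_mul_deriv_sigmoid_pos (x : ℝ) :
    0 < sigmoid x ^ 2 + softplus x * (sigmoid x * (1 - sigmoid x)) := by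
  have := sigmoid_pos x
  have := sub_pos.2 (sigmoid_lt_one x)
  have := softplus_pos x
  positivity

end Real

open Real

noncomputable def softplusSquared (β x : ℝ) : ℝ := 1 / (2 * β ^ 4) * softplus (β ^ 2 * x) ^ 2

lemma hasDerivAt_softplusSquared {β : ℝ} (hβ : β ≠ 0) (x : ℝ) :
    HasDerivAt (softplusSquared β)
      (softplus (β ^ 2 * x) * sigmoid (β ^ 2 * x) / β ^ 2) x := by
  have hs := (hasDerivAt_softplus (β ^ 2 * x)).comp x ((hasDerivAt_id x).const_mul (β ^ 2))
  refine ((hs.pow 2).const_mul (1 / (2 * β ^ 4))).congr_deriv ?_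
  simp only [Function.comp_apply, Nat.cast_ofNat]
  field

lemma hasDerivAt_deriv_softplusSquared {β : ℝ} (hβ : β ≠ 0) (x : ℝ) :
    HasDerivAt (deriv (softplusSquared β))
      (sigmoid (β ^ 2 * x) ^ 2 +
        softplus (β ^ 2 * x) * (sigmoid (β ^ 2 * x) * (1 - sigmoid (β ^ 2 * x)))) x := by
  rw [funext fun y ↦ (hasDerivAt_softplusSquared hβ y).deriv]
  have hs := (hasDerivAt_softplus_mul_sigmoid (β ^ 2 * x)).comp x
    ((hasDerivAt_id x).const_mul (β ^ 2))
  refine (hs.div_const (β ^ 2)).congr_deriv ?_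
  field

/-- For every β ≠ 0, SoftplusSquared is twice differentiable on ℝ with strictly
positive second derivative at every point; in particular it is strictly convex. -/
theorem softplusSquared_second_deriv_pos (β : ℝ) (hβ : β ≠ 0) :
    (∀ x : ℝ, DifferentiableAt ℝ
        (fun x : ℝ => (1 / (2 * β ^ 4)) * (Real.log (1 + Real.exp (β ^ 2 * x))) ^ 2) x) ∧
    (∀ x : ℝ, DifferentiableAt ℝ
        (deriv (fun x : ℝ =>
          (1 / (2 * β ^ 4)) * (Real.log (1 + Real.exp (β ^ 2 * x))) ^ 2)) x) ∧
    (∀ x : ℝ, 0 < deriv (deriv (fun x : ℝ =>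
        (1 / (2 * β ^ 4)) * (Real.log (1 + Real.exp (β ^ 2 * x))) ^ 2)) x) ∧
    StrictConvexOn ℝ Set.univ
      (fun x : ℝ => (1 / (2 * β ^ 4)) * (Real.log (1 + Real.exp (β ^ 2 * x))) ^ 2) := by
  change (∀ x, DifferentiableAt ℝ (softplusSquared β) x) ∧
    (∀ x, DifferentiableAt ℝ (deriv (softplusSquared β)) x) ∧
    (∀ x, 0 < deriv (deriv (softplusSquared β)) x) ∧ StrictConvexOn ℝ Set.univ (softplusSquared β)
  have hpos (x : ℝ) : 0 < deriv (deriv (softplusSquared β)) x := by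
    rw [(hasDerivAt_deriv_softplusSquared hβ x).deriv]
    exact sigmoid_sq_add_softplus_mul_deriv_sigmoid_pos _
  refine ⟨fun x ↦ (hasDerivAt_softplusSquared hβ x).differentiableAt,
    fun x ↦ (hasDerivAt_deriv_softplusSquared hβ x).differentiableAt, hpos, ?_⟩
  refine strictConvexOn_of_deriv2_pos' convex_univ ?_ fun x _ ↦ hpos x
  exact fun x _ ↦ (hasDerivAt_softplusSquared hβ x).continuousAt.continuousWithinAt
end
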